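/- Let L : ℝ² → ℝ² be a smooth vector field with components (L₁, L₂) in Cartesian coordinates (x,y). The symmetrized Jacobian L_{(a,b)} = ½(∂L_a/∂q^b + ∂L_b/∂q^a) is a second-order Killing tensor of the Euclidean plane E² if and only if there exist real constants a, β, A, B, a₈, a₉, a₁₀, a₁₁ such that L₁ = −2β y² + 2a x y + A x + a₈ y + a₁₁ and L₂ = −2a x² + 2β x y + a₁₀ x + B y + a₉; in that case, writing 2C = a₈ + a₁₀, the generated Killing tensor is L_{(1,1)} = 2a y + A, L_{(1,2)} = −a x − β y + C, L_{(2,2)} = 2β x + B. -/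

import Mathlib

/-- Spatial partial derivative `∂f/∂q^a` of a function `f : ℝⁿ → ℝ`. -/
noncomputable def dS {n : ℕ} (f : (Fin n → ℝ) → ℝ) (a : Fin n) (q : Fin n → ℝ) : ℝ :=
  deriv (fun s => f (Function.update q a s)) (q a)

/-- A second-order Killing tensor of the Euclidean space `ℝⁿ`: a smooth,
symmetric matrix-valued map `C_{ab}(q)` satisfying the Killing tensor equation
`C_{(ab,c)} = 0` (in Cartesian coordinates). -/
def IsKillingTensor {n : ℕ} (C : (Fin n → ℝ) → Fin n → Fin n → ℝ) : Prop :=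
  (∀ a b, ContDiff ℝ (⊤ : ℕ∞) (fun q => C q a b)) ∧
  (∀ q a b, C q a b = C q b a) ∧
  (∀ q, ∀ a b c : Fin n,
    dS (fun q => C q a b) c q + dS (fun q => C q b c) a q + dS (fun q => C q c a) b q = 0)

/-- The symmetrized Jacobian `L_{(a,b)} = ½(∂L_a/∂q^b + ∂L_b/∂q^a)` of a vector
field `L` on `ℝⁿ`. -/
noncomputable def SymJac {n : ℕ} (L : (Fin n → ℝ) → Fin n → ℝ)
    (q : Fin n → ℝ) (a b : Fin n) : ℝ :=
  (1 / 2) * (dS (fun q => L q a) b q + dS (fun q => L q b) a q)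

open Function


lemma update_line {n : ℕ} (q : Fin n → ℝ) (a : Fin n) (s : ℝ) :
    Function.update q a s = q + (s - q a) • (Pi.single a 1 : Fin n → ℝ) := by
  funext b
  by_cases h : b = a
  · subst h; simp
  · simp [Function.update_of_ne h, Pi.single_eq_of_ne h]

lemma hasDerivAt_slice {n : ℕ} {f : (Fin n → ℝ) → ℝ} (hf : Differentiable ℝ f)
    (a : Fin n) (q : Fin n → ℝ) (s : ℝ) :
    HasDerivAt (fun s => f (Function.update q a s))
      (fderiv ℝ f (Function.update q a s) (Pi.single a 1)) s := by
  have hline : HasDerivAt (fun t : ℝ => q + (t - q a) • (Pi.single a 1 : Fin n → ℝ))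
      (Pi.single a 1) s := by
    have h0 := ((hasDerivAt_id s).sub_const (q a)).smul_const (Pi.single a 1 : Fin n → ℝ)
    have h1 := h0.const_add q
    simpa using h1
  have h2 := (hf _).hasFDerivAt.comp_hasDerivAt s hline
  have he : (fun t : ℝ => q + (t - q a) • (Pi.single a 1 : Fin n → ℝ))
      = fun t => Function.update q a t := by
    funext t; rw [update_line]
  rw [he, ← update_line] at h2
  exact h2

lemma dS_eq_fderiv {n : ℕ} {f : (Fin n → ℝ) → ℝ} (hf : Differentiable ℝ f)
    (a : Fin n) (q : Fin n → ℝ) :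
    dS f a q = fderiv ℝ f q (Pi.single a 1) := by
  have h := hasDerivAt_slice hf a q (q a)
  rw [Function.update_eq_self] at h
  exact h.deriv

lemma dS_contDiff {n : ℕ} {f : (Fin n → ℝ) → ℝ} (hf : ContDiff ℝ (⊤ : ℕ∞) f) (a : Fin n) :
    ContDiff ℝ (⊤ : ℕ∞) (dS f a) := by
  have hd : Differentiable ℝ f := hf.differentiable (by simp)
  have : (dS f a) = fun q => fderiv ℝ f q (Pi.single a 1) := by
    funext q; exact dS_eq_fderiv hd a q
  rw [this]
  exact (hf.fderiv_right (le_of_eq rfl)).clm_apply contDiff_const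

lemma fderiv_dS {n : ℕ} {f : (Fin n → ℝ) → ℝ} (hf : ContDiff ℝ (⊤ : ℕ∞) f) (a : Fin n)
    (q : Fin n → ℝ) (w : Fin n → ℝ) :
    fderiv ℝ (dS f a) q w = fderiv ℝ (fderiv ℝ f) q w (Pi.single a 1) := by
  have hd : Differentiable ℝ f := hf.differentiable (by simp)
  have he : dS f a = fun q => (ContinuousLinearMap.apply ℝ ℝ (Pi.single a 1 : Fin n → ℝ))
      (fderiv ℝ f q) := by
    funext q; exact dS_eq_fderiv hd a q
  have hf' : DifferentiableAt ℝ (fderiv ℝ f) q :=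
    ((hf.fderiv_right (m := (⊤ : ℕ∞)) (by simp)).differentiable (by simp)) q
  have hc := ((ContinuousLinearMap.apply ℝ ℝ (Pi.single a 1 : Fin n → ℝ)).hasFDerivAt.comp q
    hf'.hasFDerivAt)
  rw [he]
  have : (fun q => (ContinuousLinearMap.apply ℝ ℝ (Pi.single a 1 : Fin n → ℝ)) (fderiv ℝ f q))
      = (ContinuousLinearMap.apply ℝ ℝ (Pi.single a 1 : Fin n → ℝ)) ∘ (fderiv ℝ f) := rfl
  rw [this, hc.fderiv]
  rfl

lemma dS_comm {n : ℕ} {f : (Fin n → ℝ) → ℝ} (hf : ContDiff ℝ (⊤ : ℕ∞) f) (a b : Fin n)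
    (q : Fin n → ℝ) :
    dS (dS f a) b q = dS (dS f b) a q := by
  have hd : Differentiable ℝ f := hf.differentiable (by simp)
  have hda : Differentiable ℝ (dS f a) := (dS_contDiff hf a).differentiable (by simp)
  have hdb : Differentiable ℝ (dS f b) := (dS_contDiff hf b).differentiable (by simp)
  rw [dS_eq_fderiv hda b q, dS_eq_fderiv hdb a q, fderiv_dS hf a q, fderiv_dS hf b q]
  exact second_derivative_symmetric (fun y => (hd y).hasFDerivAt)
    (((hf.fderiv_right (m := (⊤ : ℕ∞)) (by simp)).differentiable (by simp)) q).hasFDerivAt _ _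

lemma basis_decomp (w : Fin 2 → ℝ) :
    w = w 0 • (Pi.single 0 1 : Fin 2 → ℝ) + w 1 • (Pi.single 1 1 : Fin 2 → ℝ) := by
  funext i
  fin_cases i <;> simp [Pi.single_apply]

lemma const_of_dS_zero {f : (Fin 2 → ℝ) → ℝ} (hf : ContDiff ℝ (⊤ : ℕ∞) f)
    (h0 : ∀ q, dS f 0 q = 0) (h1 : ∀ q, dS f 1 q = 0) (q : Fin 2 → ℝ) :
    f q = f 0 := by
  have hd : Differentiable ℝ f := hf.differentiable (by simp)
  apply is_const_of_fderiv_eq_zero hd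
  intro x
  ext w
  have hw := basis_decomp w
  rw [hw]
  have e0 : fderiv ℝ f x (Pi.single 0 1) = 0 := by rw [← dS_eq_fderiv hd 0 x]; exact h0 x
  have e1 : fderiv ℝ f x (Pi.single 1 1) = 0 := by rw [← dS_eq_fderiv hd 1 x]; exact h1 x
  simp [e0, e1]

lemma hasDerivAt_quad (c2 c1 c0 x : ℝ) :
    HasDerivAt (fun s : ℝ => c2 * s ^ 2 + c1 * s + c0) (2 * c2 * x + c1) x := by
  have h := (((hasDerivAt_pow 2 x).const_mul c2).add ((hasDerivAt_id x).const_mul c1)).add_const c0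
  refine h.congr_deriv ?_
  ring

lemma dS_of_eq {f : (Fin 2 → ℝ) → ℝ} {a : Fin 2} {q : Fin 2 → ℝ} {c2 c1 c0 : ℝ}
    (h : ∀ s, f (Function.update q a s) = c2 * s ^ 2 + c1 * s + c0) :
    dS f a q = 2 * c2 * q a + c1 := by
  unfold dS
  have : (fun s => f (Function.update q a s)) = fun s => c2 * s ^ 2 + c1 * s + c0 :=
    funext h
  rw [this]
  exact (hasDerivAt_quad c2 c1 c0 (q a)).deriv

lemma dS_congr {n : ℕ} {f g : (Fin n → ℝ) → ℝ} (h : ∀ q, f q = g q) (a : Fin n)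
    (q : Fin n → ℝ) : dS f a q = dS g a q := by
  have : f = g := funext h
  rw [this]

lemma dS_smul_add {n : ℕ} {f g : (Fin n → ℝ) → ℝ} (hf : Differentiable ℝ f)
    (hg : Differentiable ℝ g) (α γ : ℝ) (a : Fin n) (q : Fin n → ℝ) :
    dS (fun q => α * f q + γ * g q) a q = α * dS f a q + γ * dS g a q := by
  have h1 := (hasDerivAt_slice hf a q (q a)).const_mul α
  have h2 := (hasDerivAt_slice hg a q (q a)).const_mul γ
  have h := h1.add h2
  rw [Function.update_eq_self] at h
  rw [dS_eq_fderiv hf a q, dS_eq_fderiv hg a q]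
  exact h.deriv

lemma dS_sub {n : ℕ} {f g : (Fin n → ℝ) → ℝ} (hf : Differentiable ℝ f)
    (hg : Differentiable ℝ g) (a : Fin n) (q : Fin n → ℝ) :
    dS (fun q => f q - g q) a q = dS f a q - dS g a q := by
  have h := (hasDerivAt_slice hf a q (q a)).sub (hasDerivAt_slice hg a q (q a))
  rw [Function.update_eq_self] at h
  rw [dS_eq_fderiv hf a q, dS_eq_fderiv hg a q]
  exact h.deriv

lemma contDiff_coord (i : Fin 2) : ContDiff ℝ (⊤ : ℕ∞) (fun q : Fin 2 → ℝ => q i) :=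
  contDiff_apply ℝ ℝ i

lemma contDiff_quadPoly (c20 c11 c02 cA cB cC : ℝ) :
    ContDiff ℝ (⊤ : ℕ∞) (fun q : Fin 2 → ℝ =>
      c20 * (q 0) ^ 2 + c11 * (q 0) * (q 1) + c02 * (q 1) ^ 2 + cA * (q 0) + cB * (q 1) + cC) := by
  have h0 := contDiff_coord 0
  have h1 := contDiff_coord 1
  exact (((((contDiff_const.mul (h0.pow 2)).add
    ((contDiff_const.mul h0).mul h1)).add
    (contDiff_const.mul (h1.pow 2))).add (contDiff_const.mul h0)).add
    (contDiff_const.mul h1)).add contDiff_const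

lemma eq_lin {g : (Fin 2 → ℝ) → ℝ} (hg : ContDiff ℝ (⊤ : ℕ∞) g) (d1 d2 : ℝ)
    (h0 : ∀ q, dS g 0 q = d1) (h1 : ∀ q, dS g 1 q = d2) (q : Fin 2 → ℝ) :
    g q = d1 * q 0 + d2 * q 1 + g 0 := by
  set P : (Fin 2 → ℝ) → ℝ := fun q => 0 * (q 0)^2 + 0 * (q 0) * (q 1) + 0 * (q 1)^2
      + d1 * (q 0) + d2 * (q 1) + g 0 with hPdef
  have hP : ContDiff ℝ (⊤ : ℕ∞) P := contDiff_quadPoly 0 0 0 d1 d2 (g 0)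
  have hgd : Differentiable ℝ g := hg.differentiable (by simp)
  have hPd : Differentiable ℝ P := hP.differentiable (by simp)
  have hP0 : ∀ q, dS P 0 q = d1 := by
    intro q
    have := dS_of_eq (f := P) (a := 0) (q := q) (c2 := 0) (c1 := d1)
      (c0 := d2 * q 1 + g 0) ?_
    · rw [this]; ring
    · intro s
      simp only [hPdef, Function.update_self,
        Function.update_of_ne (show (1:Fin 2) ≠ 0 by decide)]
      ring
  have hP1 : ∀ q, dS P 1 q = d2 := by
    intro q
    have := dS_of_eq (f := P) (a := 1) (q := q) (c2 := 0) (c1 := d2)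
      (c0 := d1 * q 0 + g 0) ?_
    · rw [this]; ring
    · intro s
      simp only [hPdef, Function.update_self,
        Function.update_of_ne (show (0:Fin 2) ≠ 1 by decide)]
      ring
  have hw : ContDiff ℝ (⊤ : ℕ∞) (fun q => g q - P q) := hg.sub hP
  have hkey := const_of_dS_zero hw
    (fun q => by rw [dS_sub hgd hPd, h0, hP0]; ring)
    (fun q => by rw [dS_sub hgd hPd, h1, hP1]; ring) q
  have hP00 : P 0 = g 0 := by simp [hPdef]
  have : g q - P q = g 0 - g 0 := by rw [hkey, hP00]
  simp only [hPdef] at this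
  have := sub_eq_zero.mp (by linarith [this] : g q - P q = 0)
  rw [this, hPdef]; ring

lemma eq_quad {f : (Fin 2 → ℝ) → ℝ} (hf : ContDiff ℝ (⊤ : ℕ∞) f) (c20 c11 c02 : ℝ)
    (hxx : ∀ q, dS (dS f 0) 0 q = 2 * c20)
    (hxy : ∀ q, dS (dS f 0) 1 q = c11)
    (hyy : ∀ q, dS (dS f 1) 1 q = 2 * c02) (q : Fin 2 → ℝ) :
    f q = c20 * (q 0)^2 + c11 * (q 0) * (q 1) + c02 * (q 1)^2
      + (dS f 0 0) * (q 0) + (dS f 1 0) * (q 1) + f 0 := by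
  have hg0 : ContDiff ℝ (⊤ : ℕ∞) (dS f 0) := dS_contDiff hf 0
  have hg1 : ContDiff ℝ (⊤ : ℕ∞) (dS f 1) := dS_contDiff hf 1
  have hfd : Differentiable ℝ f := hf.differentiable (by simp)
  have e0 : ∀ q, dS f 0 q = (2 * c20) * q 0 + c11 * q 1 + dS f 0 0 :=
    eq_lin hg0 (2 * c20) c11 hxx hxy
  have e1 : ∀ q, dS f 1 q = c11 * q 0 + (2 * c02) * q 1 + dS f 1 0 :=
    eq_lin hg1 c11 (2 * c02)
      (fun q => by rw [dS_comm hf 1 0 q]; exact hxy q) hyy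
  set A := dS f 0 0
  set B := dS f 1 0
  set P : (Fin 2 → ℝ) → ℝ := fun q => c20 * (q 0)^2 + c11 * (q 0) * (q 1) + c02 * (q 1)^2
      + A * (q 0) + B * (q 1) + f 0 with hPdef
  have hP : ContDiff ℝ (⊤ : ℕ∞) P := contDiff_quadPoly c20 c11 c02 A B (f 0)
  have hPd : Differentiable ℝ P := hP.differentiable (by simp)
  have hP0 : ∀ q, dS P 0 q = (2 * c20) * q 0 + c11 * q 1 + A := by
    intro q
    have := dS_of_eq (f := P) (a := 0) (q := q) (c2 := c20) (c1 := c11 * q 1 + A)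
      (c0 := c02 * (q 1)^2 + B * (q 1) + f 0) ?_
    · rw [this]; ring
    · intro s
      simp only [hPdef, Function.update_self,
        Function.update_of_ne (show (1:Fin 2) ≠ 0 by decide)]
      ring
  have hP1 : ∀ q, dS P 1 q = c11 * q 0 + (2 * c02) * q 1 + B := by
    intro q
    have := dS_of_eq (f := P) (a := 1) (q := q) (c2 := c02) (c1 := c11 * q 0 + B)
      (c0 := c20 * (q 0)^2 + A * (q 0) + f 0) ?_
    · rw [this]; ring
    · intro s
      simp only [hPdef, Function.update_self,
        Function.update_of_ne (show (0:Fin 2) ≠ 1 by decide)]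
      ring
  have hw : ContDiff ℝ (⊤ : ℕ∞) (fun q => f q - P q) := hf.sub hP
  have hkey := const_of_dS_zero hw
    (fun q => by rw [dS_sub hfd hPd, e0 q, hP0]; ring)
    (fun q => by rw [dS_sub hfd hPd, e1 q, hP1]; ring) q
  have hP00 : P 0 = f 0 := by simp [hPdef]
  rw [hP00] at hkey
  have : f q = P q := by linarith [hkey]
  rw [this, hPdef]

lemma dS_const {n : ℕ} (k : ℝ) (a : Fin n) (q : Fin n → ℝ) :
    dS (fun _ => k) a q = 0 := by
  unfold dS; simp

lemma fin2cases : ∀ a : Fin 2, a = 0 ∨ a = 1 := by decide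

/-- dS values of the polynomial vector field. -/
lemma poly_dS (L : (Fin 2 → ℝ) → Fin 2 → ℝ) (a β A B a₈ a₉ a₁₀ a₁₁ : ℝ)
    (hpoly : ∀ q : Fin 2 → ℝ,
        L q 0 = -2 * β * (q 1) ^ 2 + 2 * a * q 0 * q 1 + A * q 0 + a₈ * q 1 + a₁₁ ∧
        L q 1 = -2 * a * (q 0) ^ 2 + 2 * β * q 0 * q 1 + a₁₀ * q 0 + B * q 1 + a₉) :
    (∀ q : Fin 2 → ℝ, dS (fun q => L q 0) 0 q = 2 * a * q 1 + A) ∧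
    (∀ q : Fin 2 → ℝ, dS (fun q => L q 0) 1 q = -4 * β * q 1 + 2 * a * q 0 + a₈) ∧
    (∀ q : Fin 2 → ℝ, dS (fun q => L q 1) 0 q = -4 * a * q 0 + 2 * β * q 1 + a₁₀) ∧
    (∀ q : Fin 2 → ℝ, dS (fun q => L q 1) 1 q = 2 * β * q 0 + B) := by
  have h10 : (1 : Fin 2) ≠ 0 := by decide
  have h01 : (0 : Fin 2) ≠ 1 := by decide
  refine ⟨fun q => ?_, fun q => ?_, fun q => ?_, fun q => ?_⟩
  · have := dS_of_eq (f := fun q => L q 0) (a := 0) (q := q) (c2 := 0)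
      (c1 := 2 * a * q 1 + A) (c0 := -2 * β * (q 1) ^ 2 + a₈ * q 1 + a₁₁) ?_
    · rw [this]; ring
    · intro s
      show L _ 0 = _
      rw [(hpoly _).1]
      simp only [Function.update_self, Function.update_of_ne h10]
      ring
  · have := dS_of_eq (f := fun q => L q 0) (a := 1) (q := q) (c2 := -2 * β)
      (c1 := 2 * a * q 0 + a₈) (c0 := A * q 0 + a₁₁) ?_
    · rw [this]; ring
    · intro s
      show L _ 0 = _
      rw [(hpoly _).1]
      simp only [Function.update_self, Function.update_of_ne h01]
      ring
  · have := dS_of_eq (f := fun q => L q 1) (a := 0) (q := q) (c2 := -2 * a)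
      (c1 := 2 * β * q 1 + a₁₀) (c0 := B * q 1 + a₉) ?_
    · rw [this]; ring
    · intro s
      show L _ 1 = _
      rw [(hpoly _).2]
      simp only [Function.update_self, Function.update_of_ne h10]
      ring
  · have := dS_of_eq (f := fun q => L q 1) (a := 1) (q := q) (c2 := 0)
      (c1 := 2 * β * q 0 + B) (c0 := -2 * a * (q 0) ^ 2 + a₁₀ * q 0 + a₉) ?_
    · rw [this]; ring
    · intro s
      show L _ 1 = _
      rw [(hpoly _).2]
      simp only [Function.update_self, Function.update_of_ne h01]
      ring

/-- SymJac values of the polynomial vector field (part 2 of the theorem). -/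
lemma poly_symjac (L : (Fin 2 → ℝ) → Fin 2 → ℝ) (a β A B a₈ a₉ a₁₀ a₁₁ : ℝ)
    (hpoly : ∀ q : Fin 2 → ℝ,
        L q 0 = -2 * β * (q 1) ^ 2 + 2 * a * q 0 * q 1 + A * q 0 + a₈ * q 1 + a₁₁ ∧
        L q 1 = -2 * a * (q 0) ^ 2 + 2 * β * q 0 * q 1 + a₁₀ * q 0 + B * q 1 + a₉) :
    (∀ q : Fin 2 → ℝ, SymJac L q 0 0 = 2 * a * q 1 + A) ∧
    (∀ q : Fin 2 → ℝ, SymJac L q 0 1 = -(a * q 0) - β * q 1 + (a₈ + a₁₀) / 2) ∧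
    (∀ q : Fin 2 → ℝ, SymJac L q 1 0 = -(a * q 0) - β * q 1 + (a₈ + a₁₀) / 2) ∧
    (∀ q : Fin 2 → ℝ, SymJac L q 1 1 = 2 * β * q 0 + B) := by
  obtain ⟨d00, d01, d10, d11⟩ := poly_dS L a β A B a₈ a₉ a₁₀ a₁₁ hpoly
  refine ⟨fun q => ?_, fun q => ?_, fun q => ?_, fun q => ?_⟩ <;>
    simp only [SymJac, d00, d01, d10, d11] <;> ring

lemma poly_isKilling (L : (Fin 2 → ℝ) → Fin 2 → ℝ) (a β A B a₈ a₉ a₁₀ a₁₁ : ℝ)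
    (hpoly : ∀ q : Fin 2 → ℝ,
        L q 0 = -2 * β * (q 1) ^ 2 + 2 * a * q 0 * q 1 + A * q 0 + a₈ * q 1 + a₁₁ ∧
        L q 1 = -2 * a * (q 0) ^ 2 + 2 * β * q 0 * q 1 + a₁₀ * q 0 + B * q 1 + a₉) :
    IsKillingTensor (SymJac L) := by
  have h10 : (1 : Fin 2) ≠ 0 := by decide
  have h01 : (0 : Fin 2) ≠ 1 := by decide
  obtain ⟨hS00, hS01, hS10, hS11⟩ := poly_symjac L a β A B a₈ a₉ a₁₀ a₁₁ hpoly
  have D000 : ∀ q : Fin 2 → ℝ, dS (fun q => SymJac L q 0 0) 0 q = 0 := by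
    intro q
    have := dS_of_eq (f := fun q => SymJac L q 0 0) (a := 0) (q := q) (c2 := 0) (c1 := 0)
      (c0 := 2 * a * q 1 + A) ?_
    · rw [this]; ring
    · intro s; show SymJac L _ 0 0 = _; rw [hS00]
      simp only [Function.update_self, Function.update_of_ne h10]; ring
  have D001 : ∀ q : Fin 2 → ℝ, dS (fun q => SymJac L q 0 0) 1 q = 2 * a := by
    intro q
    have := dS_of_eq (f := fun q => SymJac L q 0 0) (a := 1) (q := q) (c2 := 0) (c1 := 2 * a)
      (c0 := A) ?_
    · rw [this]; ring
    · intro s; show SymJac L _ 0 0 = _; rw [hS00]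
      simp only [Function.update_self, Function.update_of_ne h01]; ring
  have D010 : ∀ q : Fin 2 → ℝ, dS (fun q => SymJac L q 0 1) 0 q = -a := by
    intro q
    have := dS_of_eq (f := fun q => SymJac L q 0 1) (a := 0) (q := q) (c2 := 0) (c1 := -a)
      (c0 := -(β * q 1) + (a₈ + a₁₀) / 2) ?_
    · rw [this]; ring
    · intro s; show SymJac L _ 0 1 = _; rw [hS01]
      simp only [Function.update_self, Function.update_of_ne h10]; ring
  have D011 : ∀ q : Fin 2 → ℝ, dS (fun q => SymJac L q 0 1) 1 q = -β := by
    intro q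
    have := dS_of_eq (f := fun q => SymJac L q 0 1) (a := 1) (q := q) (c2 := 0) (c1 := -β)
      (c0 := -(a * q 0) + (a₈ + a₁₀) / 2) ?_
    · rw [this]; ring
    · intro s; show SymJac L _ 0 1 = _; rw [hS01]
      simp only [Function.update_self, Function.update_of_ne h01]; ring
  have D100 : ∀ q : Fin 2 → ℝ, dS (fun q => SymJac L q 1 0) 0 q = -a := by
    intro q
    have := dS_of_eq (f := fun q => SymJac L q 1 0) (a := 0) (q := q) (c2 := 0) (c1 := -a)
      (c0 := -(β * q 1) + (a₈ + a₁₀) / 2) ?_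
    · rw [this]; ring
    · intro s; show SymJac L _ 1 0 = _; rw [hS10]
      simp only [Function.update_self, Function.update_of_ne h10]; ring
  have D101 : ∀ q : Fin 2 → ℝ, dS (fun q => SymJac L q 1 0) 1 q = -β := by
    intro q
    have := dS_of_eq (f := fun q => SymJac L q 1 0) (a := 1) (q := q) (c2 := 0) (c1 := -β)
      (c0 := -(a * q 0) + (a₈ + a₁₀) / 2) ?_
    · rw [this]; ring
    · intro s; show SymJac L _ 1 0 = _; rw [hS10]
      simp only [Function.update_self, Function.update_of_ne h01]; ring
  have D110 : ∀ q : Fin 2 → ℝ, dS (fun q => SymJac L q 1 1) 0 q = 2 * β := by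
    intro q
    have := dS_of_eq (f := fun q => SymJac L q 1 1) (a := 0) (q := q) (c2 := 0) (c1 := 2 * β)
      (c0 := B) ?_
    · rw [this]; ring
    · intro s; show SymJac L _ 1 1 = _; rw [hS11]
      simp only [Function.update_self, Function.update_of_ne h10]; ring
  have D111 : ∀ q : Fin 2 → ℝ, dS (fun q => SymJac L q 1 1) 1 q = 0 := by
    intro q
    have := dS_of_eq (f := fun q => SymJac L q 1 1) (a := 1) (q := q) (c2 := 0) (c1 := 0)
      (c0 := 2 * β * q 0 + B) ?_
    · rw [this]; ring
    · intro s; show SymJac L _ 1 1 = _; rw [hS11]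
      simp only [Function.update_self, Function.update_of_ne h01]; ring
  refine ⟨?_, ?_, ?_⟩
  · intro i j
    rcases fin2cases i with rfl | rfl <;> rcases fin2cases j with rfl | rfl
    · have : (fun q : Fin 2 → ℝ => SymJac L q 0 0)
          = fun q => 0 * (q 0)^2 + 0 * (q 0) * (q 1) + 0 * (q 1)^2
              + 0 * (q 0) + (2 * a) * (q 1) + A := by
        funext x; rw [hS00]; ring
      rw [this]; exact contDiff_quadPoly 0 0 0 0 (2 * a) A
    · have : (fun q : Fin 2 → ℝ => SymJac L q 0 1)
          = fun q => 0 * (q 0)^2 + 0 * (q 0) * (q 1) + 0 * (q 1)^2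
              + (-a) * (q 0) + (-β) * (q 1) + (a₈ + a₁₀) / 2 := by
        funext x; rw [hS01]; ring
      rw [this]; exact contDiff_quadPoly 0 0 0 (-a) (-β) ((a₈ + a₁₀) / 2)
    · have : (fun q : Fin 2 → ℝ => SymJac L q 1 0)
          = fun q => 0 * (q 0)^2 + 0 * (q 0) * (q 1) + 0 * (q 1)^2
              + (-a) * (q 0) + (-β) * (q 1) + (a₈ + a₁₀) / 2 := by
        funext x; rw [hS10]; ring
      rw [this]; exact contDiff_quadPoly 0 0 0 (-a) (-β) ((a₈ + a₁₀) / 2)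
    · have : (fun q : Fin 2 → ℝ => SymJac L q 1 1)
          = fun q => 0 * (q 0)^2 + 0 * (q 0) * (q 1) + 0 * (q 1)^2
              + (2 * β) * (q 0) + 0 * (q 1) + B := by
        funext x; rw [hS11]; ring
      rw [this]; exact contDiff_quadPoly 0 0 0 (2 * β) 0 B
  · intro q i j
    simp only [SymJac]; ring
  · intro q i j c
    rcases fin2cases i with rfl | rfl <;> rcases fin2cases j with rfl | rfl <;>
      rcases fin2cases c with rfl | rfl <;>
      simp only [D000, D001, D010, D011, D100, D101, D110, D111] <;> ring

lemma forward_dir (L : (Fin 2 → ℝ) → Fin 2 → ℝ) (hLsm : ContDiff ℝ (⊤ : ℕ∞) L)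
    (hK : IsKillingTensor (SymJac L)) :
    ∃ a β A B a₈ a₉ a₁₀ a₁₁ : ℝ, ∀ q : Fin 2 → ℝ,
        L q 0 = -2 * β * (q 1) ^ 2 + 2 * a * q 0 * q 1 + A * q 0 + a₈ * q 1 + a₁₁ ∧
        L q 1 = -2 * a * (q 0) ^ 2 + 2 * β * q 0 * q 1 + a₁₀ * q 0 + B * q 1 + a₉ := by
  obtain ⟨hKsm, hKsym, hKeq⟩ := hK
  -- smoothness of components and their dS-derivatives
  have csm : ∀ i : Fin 2, ContDiff ℝ (⊤ : ℕ∞) (fun q => L q i) := contDiff_pi.mp hLsm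
  have sm1 : ∀ i j : Fin 2, ContDiff ℝ (⊤ : ℕ∞) (dS (fun q => L q i) j) :=
    fun i j => dS_contDiff (csm i) j
  have sm2 : ∀ i j k : Fin 2, ContDiff ℝ (⊤ : ℕ∞) (dS (dS (fun q => L q i) j) k) :=
    fun i j k => dS_contDiff (sm1 i j) k
  have df1 : ∀ i j : Fin 2, Differentiable ℝ (dS (fun q => L q i) j) :=
    fun i j => (sm1 i j).differentiable (by simp)
  have df2 : ∀ i j k : Fin 2, Differentiable ℝ (dS (dS (fun q => L q i) j) k) :=
    fun i j k => (sm2 i j k).differentiable (by simp)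
  -- expansion of the Killing tensor components
  have E : ∀ (i j c : Fin 2) (q : Fin 2 → ℝ), dS (fun q => SymJac L q i j) c q
      = 1/2 * dS (dS (fun q => L q i) j) c q + 1/2 * dS (dS (fun q => L q j) i) c q := by
    intro i j c q
    have hcong : ∀ x, SymJac L x i j
        = 1/2 * dS (fun q => L q i) j x + 1/2 * dS (fun q => L q j) i x := by
      intro x; simp only [SymJac]; ring
    rw [dS_congr hcong c q, dS_smul_add (df1 i j) (df1 j i) (1/2) (1/2) c q]
  -- the four basic Killing equations
  have h1 : ∀ q, dS (dS (fun q => L q 0) 0) 0 q = 0 := by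
    intro q; have h := hKeq q 0 0 0; simp only [E] at h; linarith
  have h2 : ∀ q, dS (dS (fun q => L q 1) 1) 1 q = 0 := by
    intro q; have h := hKeq q 1 1 1; simp only [E] at h; linarith
  have h3 : ∀ q, 2 * dS (dS (fun q => L q 0) 1) 0 q + dS (dS (fun q => L q 1) 0) 0 q = 0 := by
    intro q; have h := hKeq q 0 0 1; simp only [E] at h
    have hc : dS (dS (fun q => L q 0) 0) 1 q = dS (dS (fun q => L q 0) 1) 0 q :=
      dS_comm (csm 0) 0 1 q
    linarith
  have h4 : ∀ q, 2 * dS (dS (fun q => L q 1) 0) 1 q + dS (dS (fun q => L q 0) 1) 1 q = 0 := by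
    intro q; have h := hKeq q 1 1 0; simp only [E] at h
    have hc : dS (dS (fun q => L q 1) 1) 0 q = dS (dS (fun q => L q 1) 0) 1 q :=
      dS_comm (csm 1) 1 0 q
    linarith
  -- third-order consequences
  have z1 : ∀ (c : Fin 2) q, dS (dS (dS (fun q => L q 0) 0) 0) c q = 0 := by
    intro c q
    rw [dS_congr h1 c q, dS_const]
  have z2 : ∀ (c : Fin 2) q, dS (dS (dS (fun q => L q 1) 1) 1) c q = 0 := by
    intro c q
    rw [dS_congr h2 c q, dS_const]
  have dh3 : ∀ (c : Fin 2) q, 2 * dS (dS (dS (fun q => L q 0) 1) 0) c q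
      + dS (dS (dS (fun q => L q 1) 0) 0) c q = 0 := by
    intro c q
    have hcong : ∀ x, 2 * dS (dS (fun q => L q 0) 1) 0 x
        + 1 * dS (dS (fun q => L q 1) 0) 0 x = (0:ℝ) := by
      intro x; have := h3 x; linarith
    have e := dS_congr (g := fun _ => (0:ℝ)) hcong c q
    rw [dS_smul_add (df2 0 1 0) (df2 1 0 0) 2 1 c q, dS_const] at e
    linarith
  have dh4 : ∀ (c : Fin 2) q, 2 * dS (dS (dS (fun q => L q 1) 0) 1) c q
      + dS (dS (dS (fun q => L q 0) 1) 1) c q = 0 := by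
    intro c q
    have hcong : ∀ x, 2 * dS (dS (fun q => L q 1) 0) 1 x
        + 1 * dS (dS (fun q => L q 0) 1) 1 x = (0:ℝ) := by
      intro x; have := h4 x; linarith
    have e := dS_congr (g := fun _ => (0:ℝ)) hcong c q
    rw [dS_smul_add (df2 1 0 1) (df2 0 1 1) 2 1 c q, dS_const] at e
    linarith
  -- X := u0_xyy , Y := u1_xxy vanish
  have hXY : ∀ q, dS (dS (dS (fun q => L q 0) 1) 0) 1 q = 0
      ∧ dS (dS (dS (fun q => L q 1) 0) 0) 1 q = 0 := by
    intro q
    have t3b := dh3 1 q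
    have t4a := dh4 0 q
    have sw1 : dS (dS (dS (fun q => L q 1) 0) 1) 0 q
        = dS (dS (dS (fun q => L q 1) 0) 0) 1 q := dS_comm (sm1 1 0) 1 0 q
    have sw2 : dS (dS (dS (fun q => L q 0) 1) 1) 0 q
        = dS (dS (dS (fun q => L q 0) 1) 0) 1 q := dS_comm (sm1 0 1) 1 0 q
    constructor <;> linarith
  -- u0_xy is constant
  have hconst_xy : ∀ q, dS (dS (fun q => L q 0) 1) 0 q = dS (dS (fun q => L q 0) 1) 0 0 := by
    apply const_of_dS_zero (sm2 0 1 0)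
    · intro q
      have e1 : ∀ x, dS (dS (fun q => L q 0) 1) 0 x = dS (dS (fun q => L q 0) 0) 1 x :=
        fun x => dS_comm (csm 0) 1 0 x
      rw [dS_congr e1 0 q, dS_comm (sm1 0 0) 1 0 q]
      exact z1 1 q
    · intro q; exact (hXY q).1
  -- u0_yy is constant
  have hconst_yy : ∀ q, dS (dS (fun q => L q 0) 1) 1 q = dS (dS (fun q => L q 0) 1) 1 0 := by
    apply const_of_dS_zero (sm2 0 1 1)
    · intro q
      rw [dS_comm (sm1 0 1) 1 0 q]
      exact (hXY q).1
    · intro q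
      have t4b := dh4 1 q
      have e1 : ∀ x, dS (dS (fun q => L q 1) 0) 1 x = dS (dS (fun q => L q 1) 1) 0 x :=
        fun x => dS_comm (csm 1) 0 1 x
      have e2 : dS (dS (dS (fun q => L q 1) 0) 1) 1 q
          = dS (dS (dS (fun q => L q 1) 1) 0) 1 q := dS_congr e1 1 q
      have e3 : dS (dS (dS (fun q => L q 1) 1) 0) 1 q
          = dS (dS (dS (fun q => L q 1) 1) 1) 0 q := dS_comm (sm1 1 1) 0 1 q
      have := z2 0 q
      linarith
  set ac := dS (dS (fun q => L q 0) 1) 0 0 with hac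
  set kc := dS (dS (fun q => L q 0) 1) 1 0 with hkc
  -- reconstruct u0
  have equad0 := eq_quad (csm 0) 0 ac (kc / 2)
    (fun q => by rw [h1 q]; ring)
    (fun q => by rw [dS_comm (csm 0) 0 1 q, hconst_xy q])
    (fun q => by rw [hconst_yy q]; ring)
  -- reconstruct u1
  have equad1 := eq_quad (csm 1) (-ac) (-(kc/2)) 0
    (fun q => by have := h3 q; have := hconst_xy q; linarith)
    (fun q => by have := h4 q; have := hconst_yy q; linarith)
    (fun q => by rw [h2 q]; ring)
  refine ⟨ac / 2, -(kc / 4), dS (fun q => L q 0) 0 0, dS (fun q => L q 1) 1 0,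
    dS (fun q => L q 0) 1 0, L 0 1, dS (fun q => L q 1) 0 0, L 0 0, fun q => ⟨?_, ?_⟩⟩
  · rw [equad0 q]; ring
  · rw [equad1 q]; ring

/-- Characterization of the vector fields `L` of the Euclidean plane `E²` whose
symmetrized Jacobian `L_{(a,b)}` is a second-order Killing tensor (the reducible
Killing tensors of `E²`), together with the form of the generated Killing
tensor. Coordinates: `x = q 0`, `y = q 1`. -/
theorem reducible_killing_tensors_of_E2
    (L : (Fin 2 → ℝ) → Fin 2 → ℝ) (hLsm : ContDiff ℝ (⊤ : ℕ∞) L) :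
    (IsKillingTensor (SymJac L) ↔
      ∃ a β A B a₈ a₉ a₁₀ a₁₁ : ℝ, ∀ q : Fin 2 → ℝ,
        L q 0 = -2 * β * (q 1) ^ 2 + 2 * a * q 0 * q 1 + A * q 0 + a₈ * q 1 + a₁₁ ∧
        L q 1 = -2 * a * (q 0) ^ 2 + 2 * β * q 0 * q 1 + a₁₀ * q 0 + B * q 1 + a₉) ∧
    (∀ a β A B a₈ a₉ a₁₀ a₁₁ : ℝ,
      (∀ q : Fin 2 → ℝ,
        L q 0 = -2 * β * (q 1) ^ 2 + 2 * a * q 0 * q 1 + A * q 0 + a₈ * q 1 + a₁₁ ∧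
        L q 1 = -2 * a * (q 0) ^ 2 + 2 * β * q 0 * q 1 + a₁₀ * q 0 + B * q 1 + a₉) →
      ∀ q : Fin 2 → ℝ,
        SymJac L q 0 0 = 2 * a * q 1 + A ∧
        SymJac L q 0 1 = -(a * q 0) - β * q 1 + (a₈ + a₁₀) / 2 ∧
        SymJac L q 1 1 = 2 * β * q 0 + B) := by
  refine ⟨⟨fun hK => forward_dir L hLsm hK, ?_⟩, ?_⟩
  · rintro ⟨a, β, A, B, a₈, a₉, a₁₀, a₁₁, hpoly⟩
    exact poly_isKilling L a β A B a₈ a₉ a₁₀ a₁₁ hpoly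
  · intro a β A B a₈ a₉ a₁₀ a₁₁ hpoly q
    obtain ⟨hS00, hS01, _, hS11⟩ := poly_symjac L a β A B a₈ a₉ a₁₀ a₁₁ hpoly
    exact ⟨hS00 q, hS01 q, hS11 q⟩
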